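/- Let Y be an 𝔽_q-vector space of dimension m, U ⊆ Y a subspace of dimension j, and W ⊆ Y a subspace with dim(U + W) = k. Let l be an integer with j ≤ l ≤ m and m ≤ k + l − j. Then the number of subspaces U⁺ with dim U⁺ = l, U ⊆ U⁺ ⊆ Y, and U⁺ + W = Y equals q^{(m−l)(l−j)} · (q⁻¹)_{k−j} / ( (q⁻¹)_{m−l} (q⁻¹)_{k+l−j−m} ). -/

import Mathlib

/-!
Passing to `Y ⧸ U` reduces the count to the case `j = 0`: the number of `d`-dimensional subspaces
`V` with `V + W = Y`. These are counted through the injective linear maps `f : F^d → Y` with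
`range f + W = Y`, in two ways. Each such `V` is the range of exactly `|GL_d(𝔽_q)|` of them.
On the other hand, after splitting `Y = W ⊕ C`, such an `f` is a pair `(a, b)` with
`b : F^d → C` surjective and `a : F^d → W` injective on `ker b`; counting the `b` by duality
(surjections are transposes of injections) and the `a` by splitting `F^d = ker b ⊕ D` gives a
product of factors `∏_{i<a} (q^b - q^i) = q^{ab} (q⁻¹)_b / (q⁻¹)_{b-a}`, whence the closed
form.
-/

/-- The Pochhammer symbol `(q⁻¹)_m = ∏_{i=1}^m (1 - q^{-i})`. -/
noncomputable def qPoch (q : ℚ) (m : ℕ) : ℚ :=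
  ∏ i ∈ Finset.range m, (1 - q⁻¹ ^ (i + 1))

open Module LinearMap

theorem qPoch_pos {q : ℚ} (hq : 1 < q) (m : ℕ) : 0 < qPoch q m :=
  Finset.prod_pos fun i _ ↦
    sub_pos.2 <| pow_lt_one₀ (by positivity) (inv_lt_one_of_one_lt₀ hq) i.succ_ne_zero

theorem cast_prod_pow_sub_pow_eq_qPoch {q : ℕ} (hq : 1 < q) {a b : ℕ} (hab : a ≤ b) :
    ((∏ i ∈ Finset.range a, (q ^ b - q ^ i) : ℕ) : ℚ) =
      (q : ℚ) ^ (a * b) * qPoch q b / qPoch q (b - a) := by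
  have hq0 : (0 : ℚ) < q := by positivity
  obtain ⟨c, rfl⟩ : ∃ c, b = c + a := ⟨b - a, by omega⟩
  calc ((∏ i ∈ Finset.range a, (q ^ (c + a) - q ^ i) : ℕ) : ℚ)
      = ∏ i ∈ Finset.range a, ((q : ℚ) ^ (c + a) * (1 - (q : ℚ)⁻¹ ^ (c + i + 1))) := by
        rw [Nat.cast_prod, ← Finset.prod_range_reflect]
        refine Finset.prod_congr rfl fun i hi ↦ ?_
        simp only [Finset.mem_range] at hi
        rw [Nat.cast_sub (Nat.pow_le_pow_right (by omega) (by omega)), mul_sub, mul_one,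
          inv_pow, ← pow_sub₀ _ hq0.ne' (by omega),
          show c + a - (c + i + 1) = a - 1 - i by omega]
        push_cast
        rfl
    _ = _ := by
        rw [Finset.prod_mul_distrib, Finset.prod_const, Finset.card_range, Nat.add_sub_cancel,
          qPoch, qPoch, Finset.prod_range_add, pow_mul', mul_div_assoc, mul_div_cancel_left₀]
        exact (qPoch_pos (by exact_mod_cast hq) c).ne'

theorem Nat.card_eq_card_mul_of_card_fiber {α β : Type*} [Finite α] [Finite β] (φ : α → β)
    {c : ℕ} (h : ∀ b, Nat.card {a // φ a = b} = c) : Nat.card α = Nat.card β * c := by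
  have := Fintype.ofFinite β
  rw [← Nat.card_congr (Equiv.sigmaFiberEquiv φ), Nat.card_sigma,
    Finset.sum_congr rfl fun b _ ↦ h b, Finset.sum_const, Finset.card_univ, smul_eq_mul,
    ← Nat.card_eq_fintype_card]

theorem Nat.card_subtype_prod_eq_mul {α β : Type*} [Finite α] [Finite β]
    (P : α → β → Prop) (Q : β → Prop) {c : ℕ}
    (h : ∀ b, Q b → Nat.card {a // P a b} = c) :
    Nat.card {x : α × β // P x.1 x.2 ∧ Q x.2} = Nat.card {b // Q b} * c := by
  have := Fintype.ofFinite {b // Q b}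
  let e : {x : α × β // P x.1 x.2 ∧ Q x.2} ≃ Σ b : {b // Q b}, {a // P a b} :=
    { toFun x := ⟨⟨x.1.2, x.2.2⟩, ⟨x.1.1, x.2.1⟩⟩
      invFun y := ⟨(y.2.1, y.1.1), y.2.2, y.1.2⟩
      left_inv _ := rfl
      right_inv _ := rfl }
  rw [Nat.card_congr e, Nat.card_sigma, Finset.sum_congr rfl fun b _ ↦ h b.1 b.2,
    Finset.sum_const, Finset.card_univ, smul_eq_mul, ← Nat.card_eq_fintype_card]

theorem Module.Basis.injective_constr_iff {R ι M N : Type*} [CommRing R] [AddCommGroup M]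
    [Module R M] [AddCommGroup N] [Module R N] (b : Basis ι R M) (v : ι → N) :
    Function.Injective (b.constr R v) ↔ LinearIndependent R v := by
  refine ⟨fun h ↦ ?_, b.injective_constr_of_linearIndependent⟩
  simpa [Function.comp_def] using b.linearIndependent.map' _ (ker_eq_bot.2 h)

section Prod

variable {R M W C : Type*} [Ring R] [AddCommGroup M] [Module R M] [AddCommGroup W] [Module R W]
  [AddCommGroup C] [Module R C]

theorem LinearMap.injective_prod_iff (f : M →ₗ[R] W) (g : M →ₗ[R] C) :
    Function.Injective (f.prod g) ↔ Function.Injective (f ∘ₗ (ker g).subtype) := by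
  rw [← ker_eq_bot, ← ker_eq_bot, ker_prod, ker_comp, ← Submodule.disjoint_iff_comap_eq_bot,
    disjoint_iff, inf_comm]

theorem LinearMap.range_prod_sup_range_inl_eq_top_iff (f : M →ₗ[R] W) (g : M →ₗ[R] C) :
    range (f.prod g) ⊔ range (inl R W C) = ⊤ ↔ Function.Surjective g := by
  rw [range_inl, ← map_eq_top_iff Submodule.range_snd, ← range_comp, snd_prod, range_eq_top]

end Prod

section Quotient

variable {F Y : Type*} [DivisionRing F] [AddCommGroup Y] [Module F Y] [FiniteDimensional F Y]

theorem Submodule.finrank_map_mkQ_add_finrank {U X : Submodule F Y} (h : U ≤ X) :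
    finrank F (X.map U.mkQ) + finrank F U = finrank F X := by
  have hrange : range (U.mkQ ∘ₗ X.subtype) = X.map U.mkQ := by
    rw [range_comp, Submodule.range_subtype]
  have hker : ker (U.mkQ ∘ₗ X.subtype) = U.comap X.subtype := by
    rw [ker_comp, Submodule.ker_mkQ]
  rw [← finrank_range_add_finrank_ker (U.mkQ ∘ₗ X.subtype), hrange, hker,
    (Submodule.comapSubtypeEquivOfLe h).finrank_eq]

theorem card_finrank_le_sup_eq_top_eq_quotient (U W : Submodule F Y) {l : ℕ}
    (hl : finrank F U ≤ l) :
    Nat.card {U' : Submodule F Y // finrank F U' = l ∧ U ≤ U' ∧ U' ⊔ W = ⊤} =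
      Nat.card {V : Submodule F (Y ⧸ U) //
        finrank F V = l - finrank F U ∧ V ⊔ W.map U.mkQ = ⊤} := by
  have map_comap (V : Submodule F (Y ⧸ U)) : (V.comap U.mkQ).map U.mkQ = V :=
    Submodule.map_comap_eq_self (by rw [Submodule.range_mkQ]; exact le_top)
  have hcond (V : Submodule F (Y ⧸ U)) :
      (finrank F V = l - finrank F U ∧ V ⊔ W.map U.mkQ = ⊤) ↔
        (finrank F (V.comap U.mkQ) = l ∧ V.comap U.mkQ ⊔ W = ⊤) := by
    have hrank := Submodule.finrank_map_mkQ_add_finrank (Submodule.le_comap_mkQ U V)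
    rw [map_comap] at hrank
    have hsup : (V.comap U.mkQ ⊔ W).map U.mkQ = V ⊔ W.map U.mkQ := by
      rw [Submodule.map_sup, map_comap]
    rw [← hsup, Submodule.map_mkQ_eq_top, ← sup_assoc,
      sup_eq_right.2 (Submodule.le_comap_mkQ U V)]
    exact and_congr_left' ⟨fun _ ↦ by omega, fun _ ↦ by omega⟩
  have e : {V : Submodule F (Y ⧸ U) //
        finrank F V = l - finrank F U ∧ V ⊔ W.map U.mkQ = ⊤} ≃
      {U' : Set.Ici U // finrank F U'.1 = l ∧ U'.1 ⊔ W = ⊤} :=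
    (Submodule.comapMkQRelIso U).toEquiv.subtypeEquiv hcond
  refine (Nat.card_congr <| (e.trans <| Equiv.subtypeSubtypeEquivSubtypeInter (· ∈ Set.Ici U)
    fun U' ↦ finrank F U' = l ∧ U' ⊔ W = ⊤).trans <|
      Equiv.subtypeEquivRight fun _ ↦ ?_).symm
  tauto

end Quotient

section FiniteField

variable {F : Type*} [Field F] [Fintype F]

local notation "q" => Fintype.card F

variable {M N : Type*} [AddCommGroup M] [Module F M] [FiniteDimensional F M]
  [AddCommGroup N] [Module F N] [FiniteDimensional F N]

variable (F M N) in
theorem card_linearMap : Nat.card (M →ₗ[F] N) = q ^ (finrank F M * finrank F N) := by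
  rw [Module.natCard_eq_pow_finrank (K := F), finrank_linearMap, Nat.card_eq_fintype_card,
    mul_comm]

theorem card_injective_linearMap (h : finrank F M ≤ finrank F N) :
    Nat.card {f : M →ₗ[F] N // Function.Injective f} =
      ∏ i ∈ Finset.range (finrank F M), (q ^ finrank F N - q ^ i) := by
  have := Module.finite_of_finite F (M := N)
  let b := Module.finBasis F M
  rw [← Nat.card_congr
      ((b.constr F).toEquiv.subtypeEquiv fun v ↦ (b.injective_constr_iff v).symm),
    card_linearIndependent h, Fin.prod_univ_eq_prod_range (fun i ↦ q ^ finrank F N - q ^ i)]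

theorem card_surjective_linearMap (h : finrank F N ≤ finrank F M) :
    Nat.card {f : M →ₗ[F] N // Function.Surjective f} =
      ∏ i ∈ Finset.range (finrank F N), (q ^ finrank F M - q ^ i) := by
  have := Module.finite_of_finite F (M := M →ₗ[F] N)
  have := Module.finite_of_finite F (M := Dual F N →ₗ[F] Dual F M)
  have htranspose : Function.Bijective (Dual.transpose (R := F) (M := M) (M' := N)) := by
    refine Function.Injective.bijective_of_nat_card_le (fun f g hfg ↦ ?_) ?_
    · exact (dualMap_dualMap_eq_iff F M).1 (congrArg dualMap hfg)
    · rw [card_linearMap, card_linearMap, Subspace.dual_finrank_eq, Subspace.dual_finrank_eq,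
        mul_comm]
  have e : {f : M →ₗ[F] N // Function.Surjective f} ≃
      {g : Dual F N →ₗ[F] Dual F M // Function.Injective g} :=
    (Equiv.ofBijective _ htranspose).subtypeEquiv fun _ ↦ dualMap_injective_iff.symm
  rw [Nat.card_congr e,
    card_injective_linearMap, Subspace.dual_finrank_eq, Subspace.dual_finrank_eq]
  rwa [Subspace.dual_finrank_eq, Subspace.dual_finrank_eq]

theorem card_injective_comp_subtype (K : Submodule F M) (h : finrank F K ≤ finrank F N) :
    Nat.card {f : M →ₗ[F] N // Function.Injective (f ∘ₗ K.subtype)} =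
      (∏ i ∈ Finset.range (finrank F K), (q ^ finrank F N - q ^ i)) *
        q ^ ((finrank F M - finrank F K) * finrank F N) := by
  obtain ⟨D, hKD⟩ := K.exists_isCompl
  have e : {f : M →ₗ[F] N // Function.Injective (f ∘ₗ K.subtype)} ≃
      {g : K →ₗ[F] N // Function.Injective g} × (D →ₗ[F] N) :=
    ((ofIsComplProdEquiv hKD).toEquiv.subtypeEquiv fun p ↦ by
      rw [← show ofIsComplProdEquiv hKD p ∘ₗ K.subtype = p.1 from
        ext (ofIsCompl_apply_left hKD)]
      rfl).symm.trans Equiv.prodSubtypeFstEquivSubtypeProd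
  rw [Nat.card_congr e, Nat.card_prod, card_injective_linearMap h, card_linearMap,
    ← K.finrank_add_eq_of_isCompl hKD, Nat.add_sub_cancel_left]

theorem card_injective_surjective_prod {W C : Type*} [AddCommGroup W] [Module F W]
    [FiniteDimensional F W] [AddCommGroup C] [Module F C] [FiniteDimensional F C]
    (hC : finrank F C ≤ finrank F M) (hW : finrank F M ≤ finrank F W + finrank F C) :
    Nat.card {p : (M →ₗ[F] W) × (M →ₗ[F] C) //
        Function.Injective (p.1 ∘ₗ (ker p.2).subtype) ∧ Function.Surjective p.2} =
      (∏ i ∈ Finset.range (finrank F C), (q ^ finrank F M - q ^ i)) *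
        ((∏ i ∈ Finset.range (finrank F M - finrank F C), (q ^ finrank F W - q ^ i)) *
          q ^ (finrank F C * finrank F W)) := by
  have := Module.finite_of_finite F (M := M →ₗ[F] W)
  have := Module.finite_of_finite F (M := M →ₗ[F] C)
  rw [Nat.card_subtype_prod_eq_mul (fun f g ↦ Function.Injective (f ∘ₗ (ker g).subtype))
    (fun g ↦ Function.Surjective g) fun g hg ↦ ?_, card_surjective_linearMap hC]
  have hker : finrank F (ker g) = finrank F M - finrank F C := by
    have := finrank_range_add_finrank_ker g
    rw [range_eq_top.2 hg, finrank_top] at this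
    omega
  rw [card_injective_comp_subtype _ (by omega), hker, Nat.sub_sub_self hC]

theorem card_injective_linearMap_sup_eq_top {Y : Type*} [AddCommGroup Y] [Module F Y]
    [FiniteDimensional F Y] (W : Submodule F Y) (hM : finrank F M ≤ finrank F Y)
    (hW : finrank F Y ≤ finrank F W + finrank F M) :
    Nat.card {f : M →ₗ[F] Y // Function.Injective f ∧ range f ⊔ W = ⊤} =
      (∏ i ∈ Finset.range (finrank F Y - finrank F W), (q ^ finrank F M - q ^ i)) *
        ((∏ i ∈ Finset.range (finrank F M - (finrank F Y - finrank F W)),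
            (q ^ finrank F W - q ^ i)) *
          q ^ ((finrank F Y - finrank F W) * finrank F W)) := by
  obtain ⟨C, hWC⟩ := W.exists_isCompl
  have hC : finrank F C = finrank F Y - finrank F W := by
    rw [← W.finrank_add_eq_of_isCompl hWC, Nat.add_sub_cancel_left]
  let e := W.prodEquivOfIsCompl C hWC
  have hrange : Submodule.map e.toLinearMap (range (inl F W C)) = W := by
    rw [← range_comp, show e.toLinearMap ∘ₗ inl F W C = W.subtype by ext; simp [e],
      Submodule.range_subtype]
  let G := (LinearMap.prodEquiv (M := M) (M₂ := W) (M₃ := C) F).trans e.congrRight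
  have hG : {p : (M →ₗ[F] W) × (M →ₗ[F] C) //
        Function.Injective (p.1 ∘ₗ (ker p.2).subtype) ∧ Function.Surjective p.2} ≃
      {f : M →ₗ[F] Y // Function.Injective f ∧ range f ⊔ W = ⊤} :=
    G.toEquiv.subtypeEquiv fun p ↦ by
      change _ ↔ Function.Injective (e ∘ p.1.prod p.2) ∧
        range (e.toLinearMap ∘ₗ p.1.prod p.2) ⊔ W = ⊤
      rw [e.injective.of_comp_iff, injective_prod_iff, range_comp,
        ← range_prod_sup_range_inl_eq_top_iff p.1, ← Submodule.map_eq_top_iff (e := e),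
        Submodule.map_sup, hrange]
  rw [← Nat.card_congr hG, card_injective_surjective_prod (by omega) (by omega), hC]

theorem card_injective_linearMap_range {Y : Type*} [AddCommGroup Y] [Module F Y]
    [FiniteDimensional F Y] (P : Submodule F Y → Prop) :
    Nat.card {f : M →ₗ[F] Y // Function.Injective f ∧ P (range f)} =
      Nat.card {V : Submodule F Y // finrank F V = finrank F M ∧ P V} *
        ∏ i ∈ Finset.range (finrank F M), (q ^ finrank F M - q ^ i) := by
  have := Module.finite_of_finite F (M := M →ₗ[F] Y)
  have := Module.finite_of_finite F (M := Y)
  refine Nat.card_eq_card_mul_of_card_fiber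
    (fun f ↦ ⟨range f.1, finrank_range_of_inj f.2.1, f.2.2⟩) fun V ↦ ?_
  have range_subtype_comp {g : M →ₗ[F] V.1} (hg : Function.Injective g) :
      range (V.1.subtype ∘ₗ g) = V.1 := by
    rw [range_comp, range_eq_top.2
      ((injective_iff_surjective_of_finrank_eq_finrank V.2.1.symm).1 hg), Submodule.map_subtype_top]
  refine (Nat.card_congr (β := {g : M →ₗ[F] V.1 // Function.Injective g})
    { toFun f := ⟨f.1.1.codRestrict V.1 fun x ↦ by
          rw [← show range f.1.1 = V.1 from congrArg Subtype.val f.2]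
          exact mem_range_self _ x,
        fun x y hxy ↦ f.1.2.1 (congrArg Subtype.val hxy)⟩
      invFun g := ⟨⟨V.1.subtype ∘ₗ g.1, V.1.injective_subtype.comp g.2,
          (range_subtype_comp g.2).symm ▸ V.2.2⟩, Subtype.ext (range_subtype_comp g.2)⟩
      left_inv _ := rfl
      right_inv _ := rfl }).trans ?_
  rw [card_injective_linearMap V.2.1.ge, V.2.1]

theorem card_finrank_sup_eq_top {Y : Type*} [AddCommGroup Y] [Module F Y] [FiniteDimensional F Y]
    (W : Submodule F Y) {d : ℕ} (hd : d ≤ finrank F Y) (hW : finrank F Y ≤ finrank F W + d) :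
    (Nat.card {V : Submodule F Y // finrank F V = d ∧ V ⊔ W = ⊤} : ℚ) =
      (q : ℚ) ^ ((finrank F Y - d) * d) * qPoch q (finrank F W) /
        (qPoch q (finrank F Y - d) * qPoch q (finrank F W - (finrank F Y - d))) := by
  have hq : 1 < q := Fintype.one_lt_card
  have double_count := card_injective_linearMap_range (M := Fin d → F) (fun V ↦ V ⊔ W = ⊤)
  rw [card_injective_linearMap_sup_eq_top W (by simpa) (by simpa), finrank_fin_fun] at double_count
  have hwn : finrank F W ≤ finrank F Y := W.finrank_le
  generalize finrank F Y = n at *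
  generalize finrank F W = w at *
  -- `s = dim (V ⊓ W)`, `c = codim W` and `e = codim V` for any `V` being counted
  obtain ⟨s, c, e, rfl, rfl, rfl⟩ : ∃ s c e, d = s + c ∧ w = s + e ∧ n = s + c + e :=
    ⟨d - (n - w), n - w, n - d, by omega, by omega, by omega⟩
  rw [show s + c + e - (s + e) = c by omega, show s + c - c = s by omega] at double_count
  rw [show s + c + e - (s + c) = e by omega, show s + e - e = s by omega]
  have qcast := congrArg (Nat.cast : ℕ → ℚ) double_count
  simp only [Nat.cast_mul, Nat.cast_pow] at qcast
  rw [cast_prod_pow_sub_pow_eq_qPoch hq (by omega), cast_prod_pow_sub_pow_eq_qPoch hq (by omega),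
    cast_prod_pow_sub_pow_eq_qPoch hq le_rfl] at qcast
  rw [Nat.add_sub_cancel, Nat.add_sub_cancel_left, Nat.sub_self,
    show qPoch q 0 = 1 from rfl, div_one] at qcast
  have hP (m : ℕ) : qPoch q m ≠ 0 := (qPoch_pos (by exact_mod_cast hq) m).ne'
  field_simp [hP] at qcast ⊢
  apply mul_left_cancel₀ (pow_ne_zero ((s + c) * (s + c)) (by positivity : (q : ℚ) ≠ 0))
  linear_combination -qcast

end FiniteField

/-- The number of subspaces `U⁺` of `Y` with `dim U⁺ = l`, `U ⊆ U⁺ ⊆ Y` and `U⁺ + W = Y`. -/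
theorem statement6 {F : Type*} [Field F] [Fintype F]
    (Y : Type*) [AddCommGroup Y] [Module F Y] [FiniteDimensional F Y]
    (U W : Submodule F Y) (j k l m : ℕ)
    (hm : Module.finrank F Y = m) (hj : Module.finrank F U = j)
    (hk : Module.finrank F ↥(U ⊔ W) = k)
    (hjl : j ≤ l) (hlm : l ≤ m) (hmkl : m ≤ k + l - j) :
    (Nat.card {U' : Submodule F Y //
        Module.finrank F U' = l ∧ U ≤ U' ∧ U' ⊔ W = ⊤} : ℚ) =
      (Fintype.card F : ℚ) ^ ((m - l) * (l - j)) *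
        qPoch (Fintype.card F) (k - j) /
        (qPoch (Fintype.card F) (m - l) * qPoch (Fintype.card F) (k + l - j - m)) := by
  have hjk : j ≤ k := hj ▸ hk ▸ Submodule.finrank_mono le_sup_left
  have hquot : finrank F (Y ⧸ U) = m - j := by
    have := U.finrank_quotient_add_finrank
    omega
  have hW : finrank F (W.map U.mkQ) = k - j := by
    have := Submodule.finrank_map_mkQ_add_finrank (le_sup_left : U ≤ U ⊔ W)
    rw [Submodule.map_sup, Submodule.mkQ_map_self, bot_sup_eq] at this
    omega
  rw [card_finrank_le_sup_eq_top_eq_quotient U W (hj ▸ hjl),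
    card_finrank_sup_eq_top _ (by omega) (by omega), hquot, hW, hj,
    show m - j - (l - j) = m - l by omega,
    show k - j - (m - l) = k + l - j - m by omega]
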